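/- Minimality theorem: with N_inc = {i₁,…,i_h} enumerating the rows where δ^A_i > 0, for every matrix T ∈ [0,1]^{n×m} such that the system T □ x = b is consistent, there exist columns j₁,…,j_h such that the iterated modified matrix A^{(→i,→j)} satisfies |a^{(→i,→j)}_{kl} − a_{kl}| ≤ |t_{kl} − a_{kl}| for all entries (k,l); consequently ‖A^{(→i,→j)} − A‖_∞ ≤ ‖T − A‖_∞. -/
import Mathlib


open Finset

noncomputable def sigmaG (x y z : ℝ) : ℝ := min (max (x - z) 0 / 2) (max (y - z) 0)

noncomputable def maxminProd {n m : ℕ} [NeZero m] (T : Fin n → Fin m → ℝ)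
    (x : Fin m → ℝ) (i : Fin n) : ℝ :=
  Finset.univ.sup' Finset.univ_nonempty (fun j => min (T i j) (x j))

def IsConsistent {n m : ℕ} [NeZero m] (T : Fin n → Fin m → ℝ) (b : Fin n → ℝ) : Prop :=
  ∃ x : Fin m → ℝ, (∀ j, x j ∈ Set.Icc (0:ℝ) 1) ∧ ∀ i, maxminProd T x i = b i

def TSet {n m : ℕ} [NeZero m] (b : Fin n → ℝ) : Set (Fin n → Fin m → ℝ) :=
  {T | (∀ i j, T i j ∈ Set.Icc (0:ℝ) 1) ∧ IsConsistent T b}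

noncomputable def normInf {n m : ℕ} [NeZero n] [NeZero m] (X Y : Fin n → Fin m → ℝ) : ℝ :=
  Finset.univ.sup' Finset.univ_nonempty (fun p : Fin n × Fin m => |X p.1 p.2 - Y p.1 p.2|)

noncomputable def deltaE {n m : ℕ} [NeZero n] (b : Fin n → ℝ)
    (T : Fin n → Fin m → ℝ) (s : Fin n) (l : Fin m) : ℝ :=
  max (max (b s - T s l) 0)
    (Finset.univ.sup' Finset.univ_nonempty (fun k => sigmaG (b s) (T k l) (b k)))

noncomputable def deltaRow {n m : ℕ} [NeZero n] [NeZero m] (b : Fin n → ℝ)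
    (T : Fin n → Fin m → ℝ) (s : Fin n) : ℝ :=
  Finset.univ.inf' Finset.univ_nonempty (fun l => deltaE b T s l)

noncomputable def fmod {n m : ℕ} (b : Fin n → ℝ) (M : Fin n → Fin m → ℝ)
    (i : Fin n) (j : Fin m) : Fin n → Fin m → ℝ :=
  fun k l => if l = j then
      (if k = i then max (b i) (M i j)
       else if 0 < sigmaG (b i) (M k j) (b k) then b k else M k j)
    else M k l

noncomputable def applyMods {n m h : ℕ} (b : Fin n → ℝ) (A : Fin n → Fin m → ℝ)
    (vi : Fin h → Fin n) (vj : Fin h → Fin m) : Fin n → Fin m → ℝ :=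
  (List.finRange h).foldl (fun M lam => fmod b M (vi lam) (vj lam)) A


lemma sigmaG_pos {x y z : ℝ} (hp : 0 < sigmaG x y z) : z < x ∧ z < y := by
  unfold sigmaG at hp
  rw [lt_min_iff] at hp
  constructor
  · rcases hp.1 with h
    by_contra hc; push_neg at hc
    rw [max_eq_right (by linarith)] at h; linarith
  · rcases hp.2 with h
    by_contra hc; push_neg at hc
    rw [max_eq_right (by linarith)] at h; linarith

lemma fmod_inv {n m : ℕ} (b : Fin n → ℝ) (A T M : Fin n → Fin m → ℝ)
    (i : Fin n) (c : Fin m)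
    (hTc : b i ≤ T i c) (hTk : ∀ k, b k < b i → T k c ≤ b k)
    (hM : ∀ k l, min (A k l) (T k l) ≤ M k l ∧ M k l ≤ max (A k l) (T k l)) :
    ∀ k l, min (A k l) (T k l) ≤ fmod b M i c k l ∧
      fmod b M i c k l ≤ max (A k l) (T k l) := by
  intro k l
  unfold fmod
  by_cases hl : l = c
  · rw [if_pos hl]
    by_cases hk : k = i
    · rw [if_pos hk]
      subst hl hk
      constructor
      · exact le_trans (hM k l).1 (le_max_right _ _)
      · exact max_le (le_trans hTc (le_max_right _ _)) (hM k l).2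
    · rw [if_neg hk]
      subst hl
      by_cases hs : 0 < sigmaG (b i) (M k l) (b k)
      · obtain ⟨h1, h2⟩ := sigmaG_pos hs
        rw [if_pos hs]
        exact ⟨le_trans (min_le_right _ _) (hTk k h1), le_trans (le_of_lt h2) (hM k l).2⟩
      · rw [if_neg hs]
        exact hM k l
  · rw [if_neg hl]
    exact hM k l

lemma foldl_inv {n m h : ℕ} (b : Fin n → ℝ) (A T : Fin n → Fin m → ℝ)
    (vi : Fin h → Fin n) (vj : Fin h → Fin m)
    (hcol : ∀ lam, b (vi lam) ≤ T (vi lam) (vj lam) ∧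
      ∀ k, b k < b (vi lam) → T k (vj lam) ≤ b k) :
    ∀ (L : List (Fin h)) (M : Fin n → Fin m → ℝ),
      (∀ k l, min (A k l) (T k l) ≤ M k l ∧ M k l ≤ max (A k l) (T k l)) →
      ∀ k l, min (A k l) (T k l) ≤
          (L.foldl (fun M lam => fmod b M (vi lam) (vj lam)) M) k l ∧
        (L.foldl (fun M lam => fmod b M (vi lam) (vj lam)) M) k l ≤
          max (A k l) (T k l) := by
  intro L
  induction L with
  | nil => intro M hM; exact hM
  | cons a L ih =>
    intro M hM
    exact ih _ (fmod_inv b A T M (vi a) (vj a) (hcol a).1 (hcol a).2 hM)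

lemma interval_abs {a t v : ℝ} (h1 : min a t ≤ v) (h2 : v ≤ max a t) :
    |v - a| ≤ |t - a| := by
  rcases le_total a t with hle | hle
  · rw [min_eq_left hle] at h1
    rw [max_eq_right hle] at h2
    rw [abs_of_nonneg (by linarith), abs_of_nonneg (by linarith)]
    linarith
  · rw [min_eq_right hle] at h1
    rw [max_eq_left hle] at h2
    rw [abs_of_nonpos (by linarith), abs_of_nonpos (by linarith)]
    linarith

theorem stmt18 {n m h : ℕ} [NeZero n] [NeZero m]
    (A : Fin n → Fin m → ℝ) (b : Fin n → ℝ)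
    (hA : ∀ i j, A i j ∈ Set.Icc (0:ℝ) 1) (hb : ∀ i, b i ∈ Set.Icc (0:ℝ) 1)
    (vi : Fin h → Fin n) (hinj : Function.Injective vi)
    (hrange : ∀ i : Fin n, (∃ lam, vi lam = i) ↔ 0 < deltaRow b A i)
    (T : Fin n → Fin m → ℝ) (hT : ∀ i j, T i j ∈ Set.Icc (0:ℝ) 1)
    (hTcons : IsConsistent T b) :
    ∃ vj : Fin h → Fin m,
      (∀ k l, |applyMods b A vi vj k l - A k l| ≤ |T k l - A k l|) ∧
        normInf (applyMods b A vi vj) A ≤ normInf T A := by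
  obtain ⟨x, hx01, hxeq⟩ := hTcons
  have hchoice : ∀ i : Fin n, ∃ c : Fin m,
      b i ≤ T i c ∧ ∀ k, b k < b i → T k c ≤ b k := by
    intro i
    obtain ⟨c, -, hc⟩ := Finset.exists_mem_eq_sup' (Finset.univ_nonempty)
      (fun j => min (T i j) (x j))
    have hci : min (T i c) (x c) = b i := by
      rw [← hc]; exact hxeq i
    refine ⟨c, ?_, ?_⟩
    · rw [← hci]; exact min_le_left _ _
    · intro k hk
      have hxc : b i ≤ x c := by rw [← hci]; exact min_le_right _ _
      have hle : min (T k c) (x c) ≤ b k := by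
        rw [← hxeq k]
        exact Finset.le_sup' (fun j => min (T k j) (x j)) (Finset.mem_univ c)
      rcases min_le_iff.mp hle with h | h
      · exact h
      · linarith
  choose f hf1 hf2 using hchoice
  have hInv := foldl_inv b A T vi (fun lam => f (vi lam))
    (fun lam => ⟨hf1 (vi lam), hf2 (vi lam)⟩) (List.finRange h) A
    (fun k l => ⟨min_le_left _ _, le_max_left _ _⟩)
  refine ⟨fun lam => f (vi lam), ?_, ?_⟩
  · intro k l
    exact interval_abs (hInv k l).1 (hInv k l).2
  · apply Finset.sup'_le
    intro p _
    exact le_trans (interval_abs (hInv p.1 p.2).1 (hInv p.1 p.2).2)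
      (Finset.le_sup' (fun q : Fin n × Fin m => |T q.1 q.2 - A q.1 q.2|)
        (Finset.mem_univ p))
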